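/- arXiv:gr-qc/0610065 — 2 statements merged into one kernel-verified Lean document; each statement's English description precedes it below -/
import Mathlib

section
/- Let E be a finite-dimensional normed space, m₀, m₁ ∈ E, T > 0, and G : E → (E → E → E) a continuous field of symmetric bilinear maps. Suppose ε > 0 and C > 0 are such that for every v in the closed ball U_K ⊂ C⁰([0,T],E) of radius K = T⁻¹ε − φ (with φ as in the calibration lemma), the correction vector C_v = (m₁ − m₀ − ∫₀^T v dt)/T satisfies ‖C_v‖ < T⁻¹C, and suppose ‖G_p‖ < ε/(ε+C)² for all p in a ball containing all curves m₀ + ∫₀^t (v(s)+C_v) ds. Then the operator (Bv)(τ) = ∫₀^τ G_{m₀+∫₀^t(v+C_v)ds}(v(t)+C_v, v(t)+C_v) dt maps U_K into itself. -/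
theorem stmt9 (E : Type*) [NormedAddCommGroup E] [NormedSpace ℝ E]
    [FiniteDimensional ℝ E] (G : E → E →L[ℝ] E →L[ℝ] E)
    (hGcont : Continuous G) (hGsymm : ∀ p X Y, G p X Y = G p Y X)
    (m₀ m₁ : E) (T ε C φ K : ℝ) (hT : 0 < T) (hε : 0 < ε) (hC : 0 < C)
    (hφ : 0 < φ) (hK : K = T⁻¹ * ε - φ) (hK0 : 0 < K)
    (hcal : ∀ b : ℝ, 0 ≤ b → b < ε / (ε + C) ^ 2 →
      b * ((ε * T⁻¹ - φ) + C * T⁻¹) ^ 2 < ε * T⁻¹ ^ 2 - φ * T⁻¹)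
    (hCv : ∀ v : ℝ → E, Continuous v → (∀ t ∈ Set.Icc (0:ℝ) T, ‖v t‖ ≤ K) →
      ‖T⁻¹ • (m₁ - m₀ - ∫ t in (0:ℝ)..T, v t)‖ < T⁻¹ * C)
    (hG : ∀ v : ℝ → E, Continuous v → (∀ t ∈ Set.Icc (0:ℝ) T, ‖v t‖ ≤ K) →
      ∀ t ∈ Set.Icc (0:ℝ) T,
        ‖G (m₀ + ∫ s in (0:ℝ)..t,
            (v s + T⁻¹ • (m₁ - m₀ - ∫ r in (0:ℝ)..T, v r)))‖ < ε / (ε + C) ^ 2) :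
    ∀ v : ℝ → E, Continuous v → (∀ t ∈ Set.Icc (0:ℝ) T, ‖v t‖ ≤ K) →
      ∀ τ ∈ Set.Icc (0:ℝ) T,
        ‖∫ t in (0:ℝ)..τ,
            G (m₀ + ∫ s in (0:ℝ)..t,
                (v s + T⁻¹ • (m₁ - m₀ - ∫ r in (0:ℝ)..T, v r)))
              (v t + T⁻¹ • (m₁ - m₀ - ∫ r in (0:ℝ)..T, v r))
              (v t + T⁻¹ • (m₁ - m₀ - ∫ r in (0:ℝ)..T, v r))‖ ≤ K := by
  intro v hv hvK τ hτ
  set Cv : E := T⁻¹ • (m₁ - m₀ - ∫ r in (0:ℝ)..T, v r) with hCvdef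
  have hCvnorm : ‖Cv‖ < T⁻¹ * C := hCv v hv hvK
  set w : ℝ → E := fun t => v t + Cv with hwdef
  have hw : Continuous w := hv.add continuous_const
  set p : ℝ → E := fun t => m₀ + ∫ s in (0:ℝ)..t, w s with hpdef
  have hp : Continuous p := by
    apply continuous_const.add
    exact intervalIntegral.continuous_primitive (fun a b => hw.intervalIntegrable a b) 0
  -- continuous function on compact attains max
  have hcomp : IsCompact (Set.Icc (0:ℝ) T) := isCompact_Icc
  have hne : (Set.Icc (0:ℝ) T).Nonempty := Set.nonempty_Icc.mpr hT.le
  have hc2 : Continuous fun t => G (p t) := hGcont.comp hp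
  have hcont := Continuous.continuousOn (s := Set.Icc (0:ℝ) T) (Continuous.norm (E := E →L[ℝ] E →L[ℝ] E) hc2)
  obtain ⟨t₀, ht₀, hmax'⟩ := hcomp.exists_isMaxOn hne hcont
  have hmax : ∀ t ∈ Set.Icc (0:ℝ) T, ‖G (p t)‖ ≤ ‖G (p t₀)‖ := fun t ht => hmax' ht
  set b : ℝ := ‖G (p t₀)‖ with hbdef
  have hb0 : 0 ≤ b := hbdef ▸ norm_nonneg (E := E →L[ℝ] E →L[ℝ] E) _
  have hblt : b < ε / (ε + C) ^ 2 := hG v hv hvK t₀ ht₀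
  set A : ℝ := (ε * T⁻¹ - φ) + C * T⁻¹ with hAdef
  have hA0 : 0 ≤ A := by
    have : K + ‖Cv‖ ≤ A := by
      rw [hK, hAdef]
      have : ‖Cv‖ ≤ C * T⁻¹ := by linarith [hCvnorm]
      nlinarith [norm_nonneg Cv]
    nlinarith [norm_nonneg Cv]
  have hwA : ∀ t ∈ Set.Icc (0:ℝ) T, ‖w t‖ ≤ A := by
    intro t ht
    have h1 : ‖w t‖ ≤ ‖v t‖ + ‖Cv‖ := norm_add_le _ _
    have h2 : ‖v t‖ ≤ K := hvK t ht
    calc ‖w t‖ ≤ ‖v t‖ + ‖Cv‖ := h1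
      _ ≤ K + T⁻¹ * C := add_le_add h2 hCvnorm.le
      _ = A := by rw [hK, hAdef]; ring
  have hcal' : b * A ^ 2 < T⁻¹ * K := by
    have := hcal b hb0 hblt
    rw [hK]; nlinarith
  have hbound : ∀ t ∈ Set.uIoc (0:ℝ) τ, ‖G (p t) (w t) (w t)‖ ≤ T⁻¹ * K := by
    intro t ht
    have htT : t ∈ Set.Icc (0:ℝ) T := by
      rw [Set.uIoc_of_le hτ.1] at ht
      exact ⟨ht.1.le, ht.2.trans hτ.2⟩
    have h1 : ‖G (p t) (w t) (w t)‖ ≤ ‖G (p t)‖ * ‖w t‖ * ‖w t‖ :=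
      (G (p t)).le_opNorm₂ _ _
    have h2 : ‖G (p t)‖ ≤ b := hmax t htT
    have h3 : ‖w t‖ ≤ A := hwA t htT
    have h4 : ‖G (p t)‖ * ‖w t‖ * ‖w t‖ ≤ b * A * A :=
      mul_le_mul (mul_le_mul h2 h3 (norm_nonneg _) hb0) h3 (norm_nonneg _)
        (by positivity)
    have h5 : b * A * A = b * A ^ 2 := by ring
    calc ‖G (p t) (w t) (w t)‖ ≤ ‖G (p t)‖ * ‖w t‖ * ‖w t‖ := h1
      _ ≤ b * A * A := h4
      _ = b * A ^ 2 := h5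
      _ ≤ T⁻¹ * K := hcal'.le
  have key : ‖∫ t in (0:ℝ)..τ, G (p t) (w t) (w t)‖ ≤ T⁻¹ * K * |τ - 0| :=
    intervalIntegral.norm_integral_le_of_norm_le_const hbound
  have hτ0 : |τ - 0| = τ := by rw [sub_zero, abs_of_nonneg hτ.1]
  rw [hτ0] at key
  have hfin : T⁻¹ * K * τ ≤ K := by
    have h1 : T⁻¹ * K * τ ≤ T⁻¹ * K * T := by
      apply mul_le_mul_of_nonneg_left hτ.2
      positivity
    have h2 : T⁻¹ * K * T = K := by field_simp
    linarith
  calc ‖∫ t in (0:ℝ)..τ,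
            G (m₀ + ∫ s in (0:ℝ)..t,
                (v s + T⁻¹ • (m₁ - m₀ - ∫ r in (0:ℝ)..T, v r)))
              (v t + T⁻¹ • (m₁ - m₀ - ∫ r in (0:ℝ)..T, v r))
              (v t + T⁻¹ • (m₁ - m₀ - ∫ r in (0:ℝ)..T, v r))‖
      = ‖∫ t in (0:ℝ)..τ, G (p t) (w t) (w t)‖ := rfl
    _ ≤ T⁻¹ * K * τ := key
    _ ≤ K := hfin
end

section
/- Let E be a finite-dimensional normed space and G a continuous field of symmetric bilinear maps on E. Suppose v₀ ∈ C⁰([0,T],E) is a fixed point of the operator (Bv)(τ) = ∫₀^τ G_{m₀+∫₀^t(v+C_v)ds}(v(t)+C_v, v(t)+C_v) dt, where C_v = (m₁−m₀−∫₀^T v dt)/T. Then the curve m(τ) = m₀ + ∫₀^τ (v₀(t)+C_{v₀}) dt satisfies m(0)=m₀, m(T)=m₁, m'(0)=C_{v₀}, and the second-order ODE m''(τ) = G_{m(τ)}(m'(τ), m'(τ)) for all τ ∈ [0,T]. -/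
open intervalIntegral MeasureTheory

lemma primitive_hasDerivAt' {E : Type*} [NormedAddCommGroup E] [NormedSpace ℝ E] [CompleteSpace E]
    {f : ℝ → E} (hf : Continuous f) (a b : ℝ) :
    HasDerivAt (fun u => ∫ x in a..u, f x) (f b) b :=
  intervalIntegral.integral_hasDerivAt_right (hf.intervalIntegrable _ _)
    (hf.stronglyMeasurableAtFilter _ _) hf.continuousAt

theorem stmt10 (E : Type*) [NormedAddCommGroup E] [NormedSpace ℝ E]
    [FiniteDimensional ℝ E] (G : E → E →L[ℝ] E →L[ℝ] E)
    (hGcont : Continuous G) (hGsymm : ∀ p X Y, G p X Y = G p Y X)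
    (m₀ m₁ : E) (T : ℝ) (hT : 0 < T) (v₀ : ℝ → E) (hv₀ : Continuous v₀)
    (C₀ : E) (hC₀ : C₀ = T⁻¹ • (m₁ - m₀ - ∫ t in (0:ℝ)..T, v₀ t))
    (m : ℝ → E) (hm : ∀ τ, m τ = m₀ + ∫ t in (0:ℝ)..τ, (v₀ t + C₀))
    (hfix : ∀ τ ∈ Set.Icc (0:ℝ) T,
      v₀ τ = ∫ t in (0:ℝ)..τ, G (m t) (v₀ t + C₀) (v₀ t + C₀)) :
    m 0 = m₀ ∧ m T = m₁ ∧ v₀ 0 = 0 ∧ HasDerivAt m C₀ 0 ∧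
    (∀ τ ∈ Set.Icc (0:ℝ) T,
      HasDerivAt m (v₀ τ + C₀) τ ∧
      HasDerivWithinAt (fun t => v₀ t + C₀)
        (G (m τ) (v₀ τ + C₀) (v₀ τ + C₀)) (Set.Icc (0:ℝ) T) τ) := by
  have hf : Continuous fun t => v₀ t + C₀ := hv₀.add continuous_const
  have hm0 : m 0 = m₀ := by simp [hm 0]
  have hv00 : v₀ 0 = 0 := by simpa using hfix 0 ⟨le_refl 0, hT.le⟩
  have hmd : ∀ τ, HasDerivAt m (v₀ τ + C₀) τ := by
    intro τ
    have : HasDerivAt (fun u => m₀ + ∫ x in (0:ℝ)..u, (v₀ x + C₀)) (v₀ τ + C₀) τ :=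
      (primitive_hasDerivAt' hf 0 τ).const_add m₀
    exact this.congr_of_eventuallyEq (Filter.Eventually.of_forall fun x => (hm x))
  have hmc : Continuous m := continuous_iff_continuousAt.2 fun x => (hmd x).continuousAt
  have hmT : m T = m₁ := by
    have hi : ∫ t in (0:ℝ)..T, (v₀ t + C₀)
        = (∫ t in (0:ℝ)..T, v₀ t) + (T - 0) • C₀ := by
      rw [intervalIntegral.integral_add (hv₀.intervalIntegrable _ _)
        (intervalIntegrable_const), intervalIntegral.integral_const]
    have hTC : T • C₀ = m₁ - m₀ - ∫ t in (0:ℝ)..T, v₀ t := by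
      rw [hC₀, smul_smul, mul_inv_cancel₀ hT.ne', one_smul]
    rw [hm T, hi, sub_zero, hTC]; abel
  refine ⟨hm0, hmT, hv00, ?_, ?_⟩
  · simpa [hv00] using hmd 0
  · intro τ hτ
    refine ⟨hmd τ, ?_⟩
    have hg : Continuous fun t => G (m t) (v₀ t + C₀) (v₀ t + C₀) :=
      ((hGcont.comp hmc).clm_apply hf).clm_apply hf
    have hw : HasDerivAt (fun u => ∫ x in (0:ℝ)..u, G (m x) (v₀ x + C₀) (v₀ x + C₀))
        (G (m τ) (v₀ τ + C₀) (v₀ τ + C₀)) τ := primitive_hasDerivAt' hg 0 τ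
    have hvw : HasDerivWithinAt v₀ (G (m τ) (v₀ τ + C₀) (v₀ τ + C₀)) (Set.Icc 0 T) τ :=
      (hw.hasDerivWithinAt).congr (fun x hx => (hfix x hx)) (hfix τ hτ)
    simpa using hvw.add_const C₀
end
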